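/- The second-harmonic amplitudes for the biharmonic model satisfy η₂ = |k|η₁²(g + k⁴D)/(g − 14k⁴D) and Q₂ = 2ωkη₁²(g + k⁴D)/(g − 14k⁴D): given the linear system −sgn(k)Q₂ − kη₁Q₁ + |k|ωη₁² + 2ωη₂ = 0 and ikQ₁² + 32iDk⁵η₂ + iω²kη₁² + 2ikgη₂ − 2iωQ₂ = 0, with Q₁ = k(g+k⁴D)η₁/ω, ω² = |k|(g+k⁴D), k > 0, g − 14k⁴D ≠ 0, the unique solution (η₂, Q₂) is as stated. -/
import Mathlib


open Complex in
/-- Second-harmonic amplitudes for the biharmonic model: with ω² = k(g+k⁴D),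
    Q₁ = k(g+k⁴D)η₁/ω and g − 14k⁴D ≠ 0, the linear system
    −Q₂ − kη₁Q₁ + kωη₁² + 2ωη₂ = 0 and
    ikQ₁² + 32iDk⁵η₂ + iω²kη₁² + 2ikgη₂ − 2iωQ₂ = 0
    has the unique solution η₂ = kη₁²(g+k⁴D)/(g−14k⁴D),
    Q₂ = 2ωkη₁²(g+k⁴D)/(g−14k⁴D). -/
theorem second_harmonic_amplitudes (g D k ω η₁ Q₁ η₂ Q₂ : ℝ) (hg : 0 < g)
    (hk : 0 < k) (hω : 0 < ω) (hdisp : ω ^ 2 = k * (g + k ^ 4 * D))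
    (hres : g - 14 * k ^ 4 * D ≠ 0)
    (hQ1 : Q₁ = k * (g + k ^ 4 * D) * η₁ / ω)
    (heq1 : -Q₂ - k * η₁ * Q₁ + k * ω * η₁ ^ 2 + 2 * ω * η₂ = 0)
    (heq2 : I * k * Q₁ ^ 2 + 32 * I * D * k ^ 5 * η₂ + I * ω ^ 2 * k * η₁ ^ 2
        + 2 * I * k * g * η₂ - 2 * I * ω * Q₂ = 0) :
    η₂ = k * η₁ ^ 2 * (g + k ^ 4 * D) / (g - 14 * k ^ 4 * D) ∧
    Q₂ = 2 * ω * k * η₁ ^ 2 * (g + k ^ 4 * D) / (g - 14 * k ^ 4 * D) := by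
  have hωne : ω ≠ 0 := ne_of_gt hω
  have hkne : k ≠ 0 := ne_of_gt hk
  -- Q₁ = ω η₁
  have hQ1' : Q₁ = ω * η₁ := by
    rw [hQ1]
    field_simp
    linear_combination (-η₁) * hdisp
  -- extract the real equation from heq2
  have h2 : k * Q₁ ^ 2 + 32 * D * k ^ 5 * η₂ + ω ^ 2 * k * η₁ ^ 2
      + 2 * k * g * η₂ - 2 * ω * Q₂ = 0 := by
    have h := heq2
    rw [show I * (k : ℂ) * Q₁ ^ 2 + 32 * I * D * k ^ 5 * η₂ + I * ω ^ 2 * k * η₁ ^ 2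
        + 2 * I * k * g * η₂ - 2 * I * ω * Q₂
        = I * ((k * Q₁ ^ 2 + 32 * D * k ^ 5 * η₂ + ω ^ 2 * k * η₁ ^ 2
          + 2 * k * g * η₂ - 2 * ω * Q₂ : ℝ) : ℂ) by push_cast; ring] at h
    rcases mul_eq_zero.mp h with h' | h'
    · exact absurd h' I_ne_zero
    · exact_mod_cast h'
  subst hQ1'
  have hη : η₂ = k * η₁ ^ 2 * (g + k ^ 4 * D) / (g - 14 * k ^ 4 * D) := by
    rw [eq_div_iff hres]
    have h2k : (2 * k) ≠ 0 := by positivity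
    apply mul_left_cancel₀ h2k
    linear_combination (-1) * h2 + 2 * ω * heq1 + (2 * k * η₁ ^ 2 - 4 * η₂) * hdisp
  refine ⟨hη, ?_⟩
  have hQ : Q₂ = 2 * ω * η₂ := by linear_combination -heq1
  rw [hQ, hη]; ring
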